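/- arXiv:1707.00796 — 2 statements merged into one kernel-verified Lean document; each statement's English description precedes it below -/
import Mathlib

section
/- Fix K ≥ 1. Let X and Z_R be random variables taking values in finite measurable spaces on a probability space (Ω, μ), let W_1, …, W_K be finite-valued random variables (the joint measurements of agent i's 1st- through K-th-order neighbors), and write W = ⟨W_1, …, W_K⟩. Let Z' and Z'' be two further finite-valued random variables (the measurements for two admissible actions of agent i). Assume I[Z' : Z_R | W] = 0, I[Z' : Z_R | ⟨X, W⟩] = 0, I[Z'' : Z_R | W] = 0, and I[Z'' : Z_R | ⟨X, W⟩] = 0. Then the localized utility Ũ^K(Z) = I[X : Z | W] satisfies Ũ^K(Z') − Ũ^K(Z'') = I[X : ⟨Z', W, Z_R⟩] − I[X : ⟨Z'', W, Z_R⟩]; i.e., the K-th-order localized utility differences coincide with the global potential differences. -/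
/-!
By the chain rule, `I[X : ⟨Z, W, Z_R⟩] = I[X : ⟨W, Z_R⟩] + I[X : Z | ⟨W, Z_R⟩]`, and because `Z` and
`Z_R` are conditionally independent both given `W` and given `⟨X, W⟩`, conditioning on `Z_R` can be
dropped from the last term. Hence the global potential and the localized utility `I[X : Z | W]`
differ by `I[X : ⟨W, Z_R⟩]`, which does not depend on agent i's measurement `Z`; all these
identities reduce to linear relations between joint entropies.
-/

open MeasureTheory ProbabilityTheory

/-- Shannon entropy of a random variable with values in a finite measurable space. -/
noncomputable def entropy {Ω S : Type*} [MeasurableSpace Ω] [Fintype S] [MeasurableSpace S]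
    (X : Ω → S) (μ : Measure Ω) : ℝ :=
  ∑ x : S, Real.negMulLog ((μ.map X) {x}).toReal

/-- Conditional entropy H[X | Y]. -/
noncomputable def condEntropy {Ω S T : Type*} [MeasurableSpace Ω] [Fintype S] [MeasurableSpace S]
    [Fintype T] [MeasurableSpace T] (X : Ω → S) (Y : Ω → T) (μ : Measure Ω) : ℝ :=
  ∑ y : T, ((μ.map Y) {y}).toReal * entropy X (ProbabilityTheory.cond μ (Y ⁻¹' {y}))

/-- Mutual information I[X : Y]. -/
noncomputable def mutualInfo {Ω S T : Type*} [MeasurableSpace Ω] [Fintype S] [MeasurableSpace S]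
    [Fintype T] [MeasurableSpace T] (X : Ω → S) (Y : Ω → T) (μ : Measure Ω) : ℝ :=
  entropy X μ + entropy Y μ - entropy (fun ω => (X ω, Y ω)) μ

/-- Conditional mutual information I[X : Y | Z]. -/
noncomputable def condMutualInfo {Ω S T U : Type*} [MeasurableSpace Ω] [Fintype S]
    [MeasurableSpace S] [Fintype T] [MeasurableSpace T] [Fintype U] [MeasurableSpace U]
    (X : Ω → S) (Y : Ω → T) (Z : Ω → U) (μ : Measure Ω) : ℝ :=
  ∑ z : U, ((μ.map Z) {z}).toReal * mutualInfo X Y (ProbabilityTheory.cond μ (Z ⁻¹' {z}))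
theorem Real.sum_negMulLog_const_mul {ι : Type*} (s : Finset ι) (q : ℝ) (p : ι → ℝ)
    (hp : ∑ i ∈ s, p i = 1) :
    ∑ i ∈ s, Real.negMulLog (q * p i) = Real.negMulLog q + q * ∑ i ∈ s, Real.negMulLog (p i) := by
  simp only [Real.negMulLog_mul, Finset.sum_add_distrib, ← Finset.sum_mul, ← Finset.mul_sum, hp,
    one_mul]

theorem condMutualInfo_eq_condEntropy {Ω S T U : Type*} [MeasurableSpace Ω]
    [Fintype S] [MeasurableSpace S] [Fintype T] [MeasurableSpace T] [Fintype U] [MeasurableSpace U]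
    (X : Ω → S) (Y : Ω → T) (Z : Ω → U) (μ : Measure Ω) :
    condMutualInfo X Y Z μ =
      condEntropy X Z μ + condEntropy Y Z μ - condEntropy (fun ω => (X ω, Y ω)) Z μ := by
  simp only [condMutualInfo, condEntropy, mutualInfo, ← Finset.sum_add_distrib,
    ← Finset.sum_sub_distrib, mul_add, mul_sub]

section

variable {Ω S T U V : Type*} [MeasurableSpace Ω]
  [MeasurableSpace S] [MeasurableSingletonClass S] [MeasurableSpace T] [MeasurableSingletonClass T]
  [MeasurableSpace U] [MeasurableSingletonClass U] [MeasurableSpace V] [MeasurableSingletonClass V]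
  {μ : Measure Ω} {X : Ω → S} {Y : Ω → T}

theorem map_prod_apply_singleton [IsFiniteMeasure μ] (hX : Measurable X) (hY : Measurable Y)
    (x : S) (y : T) :
    μ.map (fun ω => (X ω, Y ω)) {(x, y)} = μ.map Y {y} * (μ[|Y ⁻¹' {y}]).map X {x} := by
  rw [Measure.map_apply (hX.prodMk hY) (measurableSet_singleton _),
    Measure.map_apply hY (measurableSet_singleton _),
    Measure.map_apply hX (measurableSet_singleton _), mul_comm,
    cond_mul_eq_inter (hY (measurableSet_singleton y))]
  congr 1
  ext ω
  simp [and_comm]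

variable [Fintype S] [Fintype T] [Fintype U] [Fintype V]

theorem entropy_comp_of_injective (hX : Measurable X) {f : S → T} (hf : Function.Injective f) :
    entropy (fun ω => f (X ω)) μ = entropy X μ := by
  have hfX : Measurable fun ω => f (X ω) := (measurable_of_finite f).comp hX
  refine (Fintype.sum_of_injective f hf _ _ (fun t ht => ?_) fun x => ?_).symm
  · have : (fun ω => f (X ω)) ⁻¹' {t} = ∅ :=
      Set.eq_empty_of_forall_notMem fun ω hω => ht ⟨X ω, hω⟩
    simp [Measure.map_apply hfX (measurableSet_singleton t), this]
  · rw [Measure.map_apply hX (measurableSet_singleton x),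
      Measure.map_apply hfX (measurableSet_singleton _)]
    simp only [Set.preimage, Set.mem_singleton_iff, hf.eq_iff]

theorem entropy_prod_eq_add_condEntropy [IsFiniteMeasure μ] (hX : Measurable X)
    (hY : Measurable Y) :
    entropy (fun ω => (X ω, Y ω)) μ = entropy Y μ + condEntropy X Y μ := by
  rw [entropy, entropy, condEntropy, Fintype.sum_prod_type_right, ← Finset.sum_add_distrib]
  refine Finset.sum_congr rfl fun y _ => ?_
  simp only [map_prod_apply_singleton hX hY, ENNReal.toReal_mul]
  rcases eq_or_ne (μ.map Y {y}) 0 with h | h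
  · simp [h]
  · have : IsProbabilityMeasure (μ[|Y ⁻¹' {y}]) :=
      cond_isProbabilityMeasure (by rwa [Measure.map_apply hY (measurableSet_singleton y)] at h)
    have : IsProbabilityMeasure ((μ[|Y ⁻¹' {y}]).map X) :=
      Measure.isProbabilityMeasure_map hX.aemeasurable
    exact Real.sum_negMulLog_const_mul _ _ _ (by simp [← measureReal_def])

theorem condMutualInfo_eq_entropy [IsFiniteMeasure μ] {Z : Ω → U} (hX : Measurable X)
    (hY : Measurable Y) (hZ : Measurable Z) :
    condMutualInfo X Y Z μ =
      entropy (fun ω => (X ω, Z ω)) μ + entropy (fun ω => (Y ω, Z ω)) μ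
        - entropy (fun ω => ((X ω, Y ω), Z ω)) μ - entropy Z μ := by
  rw [condMutualInfo_eq_condEntropy, entropy_prod_eq_add_condEntropy hX hZ,
    entropy_prod_eq_add_condEntropy hY hZ, entropy_prod_eq_add_condEntropy (hX.prodMk hY) hZ]
  ring

theorem mutualInfo_prod_eq_add_condMutualInfo_of_condIndep [IsFiniteMeasure μ] {Z : Ω → T}
    {R : Ω → U} {W : Ω → V} (hX : Measurable X) (hZ : Measurable Z) (hR : Measurable R)
    (hW : Measurable W) (hZR_W : condMutualInfo Z R W μ = 0)
    (hZR_XW : condMutualInfo Z R (fun ω => (X ω, W ω)) μ = 0) :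
    mutualInfo X (fun ω => (Z ω, W ω, R ω)) μ
      = mutualInfo X (fun ω => (W ω, R ω)) μ + condMutualInfo X Z W μ := by
  rw [condMutualInfo_eq_entropy hZ hR hW] at hZR_W
  rw [condMutualInfo_eq_entropy hZ hR (hX.prodMk hW)] at hZR_XW
  rw [condMutualInfo_eq_entropy hX hZ hW, mutualInfo, mutualInfo]
  have h₁ : entropy (fun ω => (Z ω, W ω, R ω)) μ = entropy (fun ω => ((Z ω, R ω), W ω)) μ :=
    entropy_comp_of_injective ((hZ.prodMk hR).prodMk hW) (f := fun p => (p.1.1, p.2, p.1.2))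
      (Function.LeftInverse.injective (g := fun p => ((p.1, p.2.2), p.2.1)) fun _ => rfl)
  have h₂ : entropy (fun ω => (X ω, Z ω, W ω, R ω)) μ
      = entropy (fun ω => ((Z ω, R ω), X ω, W ω)) μ :=
    entropy_comp_of_injective ((hZ.prodMk hR).prodMk (hX.prodMk hW))
      (f := fun p => (p.2.1, p.1.1, p.2.2, p.1.2))
      (Function.LeftInverse.injective (g := fun p => ((p.2.1, p.2.2.2), p.1, p.2.2.1)) fun _ => rfl)
  have h₃ : entropy (fun ω => (Z ω, X ω, W ω)) μ = entropy (fun ω => ((X ω, Z ω), W ω)) μ :=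
    entropy_comp_of_injective ((hX.prodMk hZ).prodMk hW) (f := fun p => (p.1.2, p.1.1, p.2))
      (Function.LeftInverse.injective (g := fun p => ((p.2.1, p.1), p.2.2)) fun _ => rfl)
  have h₄ : entropy (fun ω => (W ω, R ω)) μ = entropy (fun ω => (R ω, W ω)) μ :=
    entropy_comp_of_injective (hR.prodMk hW) (f := Prod.swap) Prod.swap_injective
  have h₅ : entropy (fun ω => (X ω, W ω, R ω)) μ = entropy (fun ω => (R ω, X ω, W ω)) μ :=
    entropy_comp_of_injective (hR.prodMk (hX.prodMk hW)) (f := fun p => (p.2.1, p.2.2, p.1))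
      (Function.LeftInverse.injective (g := fun p => (p.2.2, p.1, p.2.1)) fun _ => rfl)
  linarith

end

theorem Kth_order_localized_utility_is_potential_aligned_general
    {Ω 𝒳 𝒵R 𝒵' 𝒵'' : Type*} [MeasurableSpace Ω]
    [Fintype 𝒳] [MeasurableSpace 𝒳] [MeasurableSingletonClass 𝒳]
    [Fintype 𝒵R] [MeasurableSpace 𝒵R] [MeasurableSingletonClass 𝒵R]
    [Fintype 𝒵'] [MeasurableSpace 𝒵'] [MeasurableSingletonClass 𝒵']
    [Fintype 𝒵''] [MeasurableSpace 𝒵''] [MeasurableSingletonClass 𝒵'']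
    (K : ℕ)
    {𝒲 : Fin K → Type*} [∀ k, Fintype (𝒲 k)] [∀ k, MeasurableSpace (𝒲 k)]
    [∀ k, MeasurableSingletonClass (𝒲 k)]
    (μ : Measure Ω) [IsProbabilityMeasure μ]
    (X : Ω → 𝒳) (ZR : Ω → 𝒵R) (W : ∀ k : Fin K, Ω → 𝒲 k) (Z' : Ω → 𝒵') (Z'' : Ω → 𝒵'')
    (hX : Measurable X) (hZR : Measurable ZR) (hW : ∀ k, Measurable (W k))
    (hZ' : Measurable Z') (hZ'' : Measurable Z'')
    (h1 : condMutualInfo Z' ZR (fun ω (k : Fin K) => W k ω) μ = 0)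
    (h2 : condMutualInfo Z' ZR (fun ω => (X ω, fun k : Fin K => W k ω)) μ = 0)
    (h3 : condMutualInfo Z'' ZR (fun ω (k : Fin K) => W k ω) μ = 0)
    (h4 : condMutualInfo Z'' ZR (fun ω => (X ω, fun k : Fin K => W k ω)) μ = 0) :
    condMutualInfo X Z' (fun ω (k : Fin K) => W k ω) μ
        - condMutualInfo X Z'' (fun ω (k : Fin K) => W k ω) μ
      = mutualInfo X (fun ω => (Z' ω, fun k : Fin K => W k ω, ZR ω)) μ
        - mutualInfo X (fun ω => (Z'' ω, fun k : Fin K => W k ω, ZR ω)) μ := by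
  have hWjoint : Measurable fun ω (k : Fin K) => W k ω := measurable_pi_lambda _ hW
  rw [mutualInfo_prod_eq_add_condMutualInfo_of_condIndep hX hZ' hZR hWjoint h1 h2,
    mutualInfo_prod_eq_add_condMutualInfo_of_condIndep hX hZ'' hZR hWjoint h3 h4]
  ring

/-- Proposition 2: if agent i's measurements are conditionally independent of the agents outside
its K-th order neighborhood given the joint measurement W = ⟨W_1, …, W_K⟩ of its up-to-K-th-order
neighbors (both with and without conditioning on the target X), then the K-th-order localized
utility Ũ^K(Z) = I[X : Z | W] has differences coinciding with the global potential differences. -/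
theorem Kth_order_localized_utility_is_potential_aligned
    {Ω 𝒳 𝒵R 𝒵' 𝒵'' : Type*} [MeasurableSpace Ω]
    [Fintype 𝒳] [MeasurableSpace 𝒳] [MeasurableSingletonClass 𝒳]
    [Fintype 𝒵R] [MeasurableSpace 𝒵R] [MeasurableSingletonClass 𝒵R]
    [Fintype 𝒵'] [MeasurableSpace 𝒵'] [MeasurableSingletonClass 𝒵']
    [Fintype 𝒵''] [MeasurableSpace 𝒵''] [MeasurableSingletonClass 𝒵'']
    (K : ℕ) (hK : 1 ≤ K)
    {𝒲 : Fin K → Type*} [∀ k, Fintype (𝒲 k)] [∀ k, MeasurableSpace (𝒲 k)]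
    [∀ k, MeasurableSingletonClass (𝒲 k)]
    (μ : Measure Ω) [IsProbabilityMeasure μ]
    (X : Ω → 𝒳) (ZR : Ω → 𝒵R) (W : ∀ k : Fin K, Ω → 𝒲 k) (Z' : Ω → 𝒵') (Z'' : Ω → 𝒵'')
    (hX : Measurable X) (hZR : Measurable ZR) (hW : ∀ k, Measurable (W k))
    (hZ' : Measurable Z') (hZ'' : Measurable Z'')
    (h1 : condMutualInfo Z' ZR (fun ω (k : Fin K) => W k ω) μ = 0)
    (h2 : condMutualInfo Z' ZR (fun ω => (X ω, fun k : Fin K => W k ω)) μ = 0)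
    (h3 : condMutualInfo Z'' ZR (fun ω (k : Fin K) => W k ω) μ = 0)
    (h4 : condMutualInfo Z'' ZR (fun ω => (X ω, fun k : Fin K => W k ω)) μ = 0) :
    condMutualInfo X Z' (fun ω (k : Fin K) => W k ω) μ
        - condMutualInfo X Z'' (fun ω (k : Fin K) => W k ω) μ
      = mutualInfo X (fun ω => (Z' ω, fun k : Fin K => W k ω, ZR ω)) μ
        - mutualInfo X (fun ω => (Z'' ω, fun k : Fin K => W k ω, ZR ω)) μ :=
  Kth_order_localized_utility_is_potential_aligned_general K μ X ZR W Z' Z'' hX hZR hW hZ' hZ'' h1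
    h2 h3 h4
end

section
/- Let ι be a finite type of players, for each i ∈ ι let S i be a nonempty finite strategy set, let X be a random variable with values in a finite measurable space on a probability space (Ω, μ), and for each player i and each action s_i ∈ S i let Z i s_i be a random variable with values in a finite measurable space (the measurement taken at sensing location s_i). Define the local utility U i s = I[X : Z i (s i) | ⟨Z j (s j)⟩_{j ≠ i}] (conditional mutual information given the joint measurement of all other players' selections) and the global objective φ s = I[X : ⟨Z j (s j)⟩_{j ∈ ι}] (mutual information with the joint measurement of all players' selections). Then φ is a potential function for U: for every player i, all actions s_i', s_i'' ∈ S i, and every profile s, U i (s_i', s_{-i}) − U i (s_i'', s_{-i}) = φ (s_i', s_{-i}) − φ (s_i'', s_{-i}). -/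
/-! By the chain rule, `I[X : Z_i | Z_{-i}] = I[X : (Z_i, Z_{-i})] - I[X : Z_{-i}]`, and the pair
`(Z_i, Z_{-i})` is an injective relabelling of the joint measurement `⟨Z_j⟩_j`, which leaves the
mutual information unchanged. Hence `U i s = φ s - I[X : Z_{-i}]`, and the subtracted term does
not depend on player `i`'s own action. -/

open MeasureTheory ProbabilityTheory

open Function

theorem Real.sum_mul_sum_negMulLog_div_sum {ι : Type*} (s : Finset ι) (p : ι → ℝ)
    (hp : ∀ i ∈ s, 0 ≤ p i) :
    (∑ i ∈ s, p i) * ∑ i ∈ s, negMulLog (p i / ∑ j ∈ s, p j)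
      = ∑ i ∈ s, negMulLog (p i) - negMulLog (∑ i ∈ s, p i) := by
  set q := ∑ i ∈ s, p i
  by_cases hq : q = 0
  · have hp0 : ∀ i ∈ s, p i = 0 := (Finset.sum_eq_zero_iff_of_nonneg hp).1 hq
    rw [hq, zero_mul, negMulLog_zero, sub_zero,
      Finset.sum_eq_zero fun i hi => by rw [hp0 i hi, negMulLog_zero]]
  · have hterm : ∀ i, q * negMulLog (p i / q) = negMulLog (p i) - p i / q * negMulLog q := by
      intro i
      have := negMulLog_mul q (p i / q)
      rw [mul_div_cancel₀ _ hq] at this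
      linarith
    rw [Finset.mul_sum, Finset.sum_congr rfl fun i _ => hterm i, Finset.sum_sub_distrib,
      ← Finset.sum_mul, ← Finset.sum_div, div_self hq, one_mul]

section Entropy

variable {Ω A B T : Type*} [MeasurableSpace Ω]
  [Fintype A] [MeasurableSpace A] [MeasurableSingletonClass A]
  [Fintype B] [MeasurableSpace B] [MeasurableSingletonClass B]
  [Fintype T] [MeasurableSpace T] [MeasurableSingletonClass T]
  {μ : Measure Ω}

theorem entropy_comp_of_injective_s9 {X : Ω → A} (hX : Measurable X) {f : A → B}
    (hf : Injective f) : entropy (f ∘ X) μ = entropy X μ := by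
  have hmap : μ.map (f ∘ X) = (μ.map X).map f :=
    (Measure.map_map (measurable_of_finite f) hX).symm
  refine (Fintype.sum_of_injective f hf _ _ (fun b hb => ?_) (fun a => ?_)).symm
  · have hempty : f ⁻¹' {b} = ∅ :=
      Set.eq_empty_of_forall_notMem fun a ha => hb ⟨a, ha⟩
    rw [hmap, Measure.map_apply (measurable_of_finite f) (measurableSet_singleton b), hempty]
    simp
  · rw [hmap, Measure.map_apply (measurable_of_finite f) (measurableSet_singleton _),
      ← Set.image_singleton, hf.preimage_image]

theorem mutualInfo_comp_right_of_injective {X : Ω → A} (hX : Measurable X) {Y : Ω → B}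
    (hY : Measurable Y) {f : B → T} (hf : Injective f) :
    mutualInfo X (f ∘ Y) μ = mutualInfo X Y μ := by
  have hpair : entropy (fun ω => (X ω, (f ∘ Y) ω)) μ = entropy (fun ω => (X ω, Y ω)) μ :=
    entropy_comp_of_injective_s9 (f := Prod.map id f) (hX.prodMk hY)
      (injective_id.prodMap hf)
  rw [mutualInfo, mutualInfo, entropy_comp_of_injective_s9 hY hf, hpair]

theorem condEntropy_eq_entropy_prod_sub [IsFiniteMeasure μ] {X : Ω → A} (hX : Measurable X)
    {Y : Ω → T} (hY : Measurable Y) :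
    condEntropy X Y μ = entropy (fun ω => (X ω, Y ω)) μ - entropy Y μ := by
  set p : T → A → ℝ := fun t a => μ.real (X ⁻¹' {a} ∩ Y ⁻¹' {t})
  have hjoint : ∀ a t, ((μ.map fun ω => (X ω, Y ω)) {(a, t)}).toReal = p t a := by
    intro a t
    rw [Measure.map_apply (hX.prodMk hY) (measurableSet_singleton _),
      ← Set.singleton_prod_singleton, Set.mk_preimage_prod]
    rfl
  have hmarginal : ∀ t, ((μ.map Y) {t}).toReal = ∑ a, p t a := by
    intro t
    have := sum_measureReal_preimage_singleton (μ := μ.restrict (Y ⁻¹' {t})) Finset.univ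
      (f := X) fun a _ => hX (measurableSet_singleton a)
    simp only [measureReal_restrict_apply (hX (measurableSet_singleton _)), Finset.coe_univ,
      Set.preimage_univ, measureReal_restrict_apply_univ] at this
    rw [Measure.map_apply hY (measurableSet_singleton t)]
    exact this.symm
  -- This holds on null fibres too: there `cond` is the zero measure and `x / 0 = 0`.
  have hcond : ∀ t a, ((cond μ (Y ⁻¹' {t})).map X {a}).toReal = p t a / ∑ a, p t a := by
    intro t a
    rw [Measure.map_apply hX (measurableSet_singleton a),
      cond_apply (hY (measurableSet_singleton t)), ENNReal.toReal_mul, ENNReal.toReal_inv,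
      ← hmarginal, Measure.map_apply hY (measurableSet_singleton t), Set.inter_comm,
      div_eq_inv_mul]
    rfl
  rw [condEntropy, entropy, entropy, Fintype.sum_prod_type_right, ← Finset.sum_sub_distrib]
  refine Finset.sum_congr rfl fun t _ => ?_
  simp only [entropy, hjoint, hmarginal, hcond]
  exact Real.sum_mul_sum_negMulLog_div_sum _ _ fun a _ => measureReal_nonneg

theorem condMutualInfo_eq_mutualInfo_prod_sub [IsFiniteMeasure μ] {X : Ω → A}
    (hX : Measurable X) {Y : Ω → B} (hY : Measurable Y) {W : Ω → T} (hW : Measurable W) :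
    condMutualInfo X Y W μ = mutualInfo X (fun ω => (Y ω, W ω)) μ - mutualInfo X W μ := by
  have hsplit : condMutualInfo X Y W μ
      = condEntropy X W μ + condEntropy Y W μ - condEntropy (fun ω => (X ω, Y ω)) W μ := by
    simp only [condMutualInfo, mutualInfo, condEntropy, mul_add, mul_sub,
      Finset.sum_add_distrib, Finset.sum_sub_distrib]
  have hassoc : entropy (fun ω => (X ω, (Y ω, W ω))) μ = entropy (fun ω => ((X ω, Y ω), W ω)) μ :=
    entropy_comp_of_injective_s9 (f := Equiv.prodAssoc A B T) ((hX.prodMk hY).prodMk hW)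
      (Equiv.injective _)
  rw [hsplit, condEntropy_eq_entropy_prod_sub hX hW, condEntropy_eq_entropy_prod_sub hY hW,
    condEntropy_eq_entropy_prod_sub (hX.prodMk hY) hW, mutualInfo, mutualInfo, hassoc]
  ring

theorem condMutualInfo_eq_mutualInfo_pi_sub {ι : Type*} [Fintype ι] [DecidableEq ι]
    {𝒵 : ι → Type*} [∀ i, Fintype (𝒵 i)] [∀ i, MeasurableSpace (𝒵 i)]
    [∀ i, MeasurableSingletonClass (𝒵 i)] [IsFiniteMeasure μ] {X : Ω → A} (hX : Measurable X)
    {Y : ∀ i, Ω → 𝒵 i} (hY : ∀ i, Measurable (Y i)) (i : ι) :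
    condMutualInfo X (Y i) (fun ω (j : {j // j ≠ i}) => Y j ω) μ
      = mutualInfo X (fun ω j => Y j ω) μ
        - mutualInfo X (fun ω (j : {j // j ≠ i}) => Y j ω) μ := by
  rw [condMutualInfo_eq_mutualInfo_prod_sub hX (hY i)
    (measurable_pi_lambda _ fun j : {j // j ≠ i} => hY j)]
  rw [← mutualInfo_comp_right_of_injective hX (measurable_pi_lambda _ hY)
    (Equiv.piSplitAt i 𝒵).injective]
  rfl

end Entropy

theorem sensor_planning_is_potential_game_general
    {ι : Type*} [Fintype ι] [DecidableEq ι]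
    {S : ι → Type*}
    {Ω 𝒳 : Type*} [MeasurableSpace Ω]
    [Fintype 𝒳] [MeasurableSpace 𝒳] [MeasurableSingletonClass 𝒳]
    {𝒵 : ι → Type*} [∀ i, Fintype (𝒵 i)] [∀ i, MeasurableSpace (𝒵 i)]
    [∀ i, MeasurableSingletonClass (𝒵 i)]
    (μ : Measure Ω) [IsProbabilityMeasure μ]
    (X : Ω → 𝒳) (hX : Measurable X)
    (Z : ∀ i, S i → Ω → 𝒵 i) (hZ : ∀ i si, Measurable (Z i si))
    (U : ∀ i : ι, (∀ j, S j) → ℝ) (φ : (∀ j, S j) → ℝ)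
    (hU : ∀ (i : ι) (s : ∀ j, S j),
      U i s = condMutualInfo X (Z i (s i))
        (fun ω (j : {j : ι // j ≠ i}) => Z j.1 (s j.1) ω) μ)
    (hφ : ∀ s : ∀ j, S j, φ s = mutualInfo X (fun ω (j : ι) => Z j (s j) ω) μ) :
    ∀ (i : ι) (si' si'' : S i) (s : ∀ j, S j),
      U i (Function.update s i si') - U i (Function.update s i si'')
        = φ (Function.update s i si') - φ (Function.update s i si'') := by
  intro i si' si'' s
  have hothers : ∀ si : S i,
      (fun ω (j : {j : ι // j ≠ i}) => Z j.1 (update s i si j.1) ω)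
        = fun ω (j : {j : ι // j ≠ i}) => Z j.1 (s j.1) ω :=
    fun si => funext₂ fun ω j => by rw [update_of_ne j.2]
  have hchain : ∀ si : S i, U i (update s i si)
      = φ (update s i si) - mutualInfo X (fun ω (j : {j : ι // j ≠ i}) => Z j.1 (s j.1) ω) μ := by
    intro si
    rw [hU, hφ, ← hothers si]
    exact condMutualInfo_eq_mutualInfo_pi_sub hX (fun j => hZ j _) i
  rw [hchain, hchain]
  ring

/-- The sensor-planning game with local utilities
`U i s = I[X : Z i (s i) | ⟨Z j (s j)⟩_{j ≠ i}]` is a potential game with potential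
`φ s = I[X : ⟨Z j (s j)⟩_{j ∈ ι}]`: unilateral utility differences equal potential
differences. -/
theorem sensor_planning_is_potential_game
    {ι : Type*} [Fintype ι] [DecidableEq ι]
    {S : ι → Type*} [∀ i, Fintype (S i)] [∀ i, Nonempty (S i)]
    {Ω 𝒳 : Type*} [MeasurableSpace Ω]
    [Fintype 𝒳] [MeasurableSpace 𝒳] [MeasurableSingletonClass 𝒳]
    {𝒵 : ι → Type*} [∀ i, Fintype (𝒵 i)] [∀ i, MeasurableSpace (𝒵 i)]
    [∀ i, MeasurableSingletonClass (𝒵 i)]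
    (μ : Measure Ω) [IsProbabilityMeasure μ]
    (X : Ω → 𝒳) (hX : Measurable X)
    (Z : ∀ i, S i → Ω → 𝒵 i) (hZ : ∀ i si, Measurable (Z i si))
    (U : ∀ i : ι, (∀ j, S j) → ℝ) (φ : (∀ j, S j) → ℝ)
    (hU : ∀ (i : ι) (s : ∀ j, S j),
      U i s = condMutualInfo X (Z i (s i))
        (fun ω (j : {j : ι // j ≠ i}) => Z j.1 (s j.1) ω) μ)
    (hφ : ∀ s : ∀ j, S j, φ s = mutualInfo X (fun ω (j : ι) => Z j (s j) ω) μ) :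
    ∀ (i : ι) (si' si'' : S i) (s : ∀ j, S j),
      U i (Function.update s i si') - U i (Function.update s i si'')
        = φ (Function.update s i si') - φ (Function.update s i si'') :=
  sensor_planning_is_potential_game_general μ X hX Z hZ U φ hU hφ
end
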